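/- arXiv:2511.00351 — 3 statements merged into one kernel-verified Lean document; each statement's English description precedes it below -/
import Mathlib

section
/- Let α be a finite type and let p, q : α → ℝ be probability mass functions (nonnegative, each summing to 1) with p ≠ q. Define the single-step speculative sampling output distribution r : α → ℝ by r(x) = min(p(x), q(x)) + (1 − ∑_y min(p(y), q(y))) · (max(0, p(x) − q(x)) / ∑_y max(0, p(y) − q(y))). Then r(x) = p(x) for every x ∈ α; i.e., proposing a token from the draft distribution q, accepting it with probability min(1, p(x)/q(x)), and on rejection resampling from the normalized residual norm(max(0, p − q)) produces exactly the target distribution p. -/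
/-- Single-step speculative sampling exactly recovers the target distribution:
if `r x = min (p x) (q x) + (1 - ∑ y, min (p y) (q y)) * (max 0 (p x - q x) / ∑ y, max 0 (p y - q y))`
then `r = p`. -/
theorem speculative_sampling_matches_target {α : Type*} [Fintype α]
    (p q : α → ℝ)
    (hp : ∀ x, 0 ≤ p x) (hq : ∀ x, 0 ≤ q x)
    (hps : ∑ x, p x = 1) (hqs : ∑ x, q x = 1)
    (hne : p ≠ q)
    (r : α → ℝ)
    (hr : ∀ x, r x = min (p x) (q x) +
      (1 - ∑ y, min (p y) (q y)) *
        (max 0 (p x - q x) / ∑ y, max 0 (p y - q y))) :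
    ∀ x, r x = p x := by
  have hkey : ∀ x, max 0 (p x - q x) = p x - min (p x) (q x) := by
    intro x
    rcases le_total (p x) (q x) with h | h
    · rw [min_eq_left h, max_eq_left (show p x - q x ≤ 0 by linarith)]; ring
    · rw [min_eq_right h, max_eq_right (show 0 ≤ p x - q x by linarith)]
  have hsum : ∑ y, max 0 (p y - q y) = 1 - ∑ y, min (p y) (q y) := by
    simp only [hkey, Finset.sum_sub_distrib, hps]
  have hSne : (1 - ∑ y, min (p y) (q y)) ≠ 0 := by
    intro h0
    have hmin : ∑ y, min (p y) (q y) = ∑ y, p y := by rw [hps]; linarith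
    have hminq : ∑ y, min (p y) (q y) = ∑ y, q y := by rw [hqs]; linarith
    have h1 : ∀ y, min (p y) (q y) = p y := by
      intro y
      have := (Finset.sum_eq_sum_iff_of_le (fun y _ => min_le_left (p y) (q y))).mp hmin
      exact this y (Finset.mem_univ y)
    have h2 : ∀ y, min (p y) (q y) = q y := by
      intro y
      have := (Finset.sum_eq_sum_iff_of_le (fun y _ => min_le_right (p y) (q y))).mp hminq
      exact this y (Finset.mem_univ y)
    exact hne (funext fun y => by rw [← h1 y, h2 y])
  intro x
  rw [hr x, hsum, hkey, mul_div_cancel₀ _ hSne]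
  ring
end

section
/- Let α be a finite type and let p, q : α → ℝ be probability mass functions (nonnegative, summing to 1). The overall probability that a draft token sampled from q is accepted by the speculative decoding verification rule equals ∑_{x ∈ α} min(p(x), q(x)); that is, ∑_{x, q(x) > 0} q(x) · min(1, p(x)/q(x)) = ∑_x min(p(x), q(x)). -/
/-- The overall acceptance probability of the speculative decoding verification
rule equals `∑ x, min (p x) (q x)`. -/
theorem overall_acceptance_prob {α : Type*} [Fintype α]
    (p q : α → ℝ)
    (hp : ∀ x, 0 ≤ p x) (hq : ∀ x, 0 ≤ q x)
    (hps : ∑ x, p x = 1) (hqs : ∑ x, q x = 1) :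
    ∑ x ∈ Finset.univ.filter (fun x => 0 < q x), q x * min 1 (p x / q x)
      = ∑ x, min (p x) (q x) := by
  rw [Finset.sum_filter]
  apply Finset.sum_congr rfl
  intro x _
  by_cases h : 0 < q x
  · rw [if_pos h, mul_min_of_nonneg _ _ (le_of_lt h), mul_one,
      mul_div_cancel₀ _ (ne_of_gt h), min_comm]
  · have hq0 : q x = 0 := le_antisymm (not_lt.mp h) (hq x)
    rw [if_neg h, hq0, min_eq_right (hp x)]
end

section
/- Let V be a finite nonempty type, K : List V → PMF V an autoregressive next-token kernel, u : List V → ℝ a utility function, comp and U the horizon-indexed completion distribution and expected utility defined from K and u. Fix a prefix y, a horizon n, a mixing weight α ∈ [0,1], and a distribution ν : PMF V whose support is contained in the set of non-pivot tokens {a : V | U n (y ++ [a]) ≥ U (n+1) y}. If the modified next-token distribution at y is the mixture K' y = α • ν + (1 − α) • K y, then E_{a ~ K' y}[U n (y ++ [a])] ≥ U (n+1) y; i.e., one step of a decoder that only overrides the target kernel with non-pivot tokens does not decrease expected utility. -/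
open scoped ENNReal

/-- Horizon-`n` completion distribution: extend prefix `y` with `n` tokens sampled
successively from the autoregressive kernel `K`. -/
noncomputable def comp {V : Type*} (K : List V → PMF V) : ℕ → List V → PMF (List V)
  | 0, y => PMF.pure y
  | n + 1, y => (K y).bind fun a => comp K n (y ++ [a])

/-- Expected utility of prefix `y` at horizon `n`:
`U n y = E_{z ~ comp n y}[u z]`. -/
noncomputable def expUtil {V : Type*} (K : List V → PMF V) (u : List V → ℝ)
    (n : ℕ) (y : List V) : ℝ :=
  ∑' z : List V, (comp K n y z).toReal * u z

lemma comp_support_finite {V : Type*} [Fintype V] (K : List V → PMF V) :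
    ∀ (n : ℕ) (y : List V), (comp K n y).support.Finite := by
  intro n
  induction n with
  | zero => intro y; simp [comp]
  | succ n ih =>
    intro y
    rw [comp, PMF.support_bind]
    exact Set.Finite.biUnion (Set.toFinite _) fun a _ => ih (y ++ [a])

lemma summable_term {V : Type*} [Fintype V] (K : List V → PMF V) (u : List V → ℝ)
    (n : ℕ) (y : List V) :
    Summable fun z : List V => (comp K n y z).toReal * u z := by
  apply summable_of_finite_support
  refine (comp_support_finite K n y).subset ?_
  intro z hz
  rw [PMF.mem_support_iff]
  intro h0
  apply hz
  simp [h0]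

lemma tower {V : Type*} [Fintype V] (K : List V → PMF V) (u : List V → ℝ)
    (n : ℕ) (y : List V) :
    expUtil K u (n + 1) y = ∑ a : V, (K y a).toReal * expUtil K u n (y ++ [a]) := by
  unfold expUtil
  have h1 : ∀ z : List V,
      (comp K (n + 1) y z).toReal * u z
        = ∑ a : V, (K y a).toReal * ((comp K n (y ++ [a]) z).toReal * u z) := by
    intro z
    rw [comp, PMF.bind_apply, tsum_fintype, ENNReal.toReal_sum (by
      intro a _
      exact ENNReal.mul_ne_top (PMF.apply_ne_top _ _) (PMF.apply_ne_top _ _)),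
      Finset.sum_mul]
    refine Finset.sum_congr rfl fun a _ => ?_
    rw [ENNReal.toReal_mul]; ring
  simp only [h1]
  rw [Summable.tsum_finsetSum (fun a _ => (summable_term K u n (y ++ [a])).mul_left _)]
  refine Finset.sum_congr rfl fun a _ => ?_
  rw [tsum_mul_left]

/-- One step of a decoder that only overrides the target kernel with non-pivot
tokens does not decrease expected utility: if `μ = α • ν + (1 - α) • K y` with
`ν` supported on the non-pivot tokens `{a | U n (y ++ [a]) ≥ U (n+1) y}`, then
`E_{a ~ μ}[U n (y ++ [a])] ≥ U (n+1) y`. -/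
theorem nonpivot_mixture_step_preserves_utility {V : Type*} [Fintype V] [Nonempty V]
    (K : List V → PMF V) (u : List V → ℝ) (y : List V) (n : ℕ)
    (α : ℝ≥0∞) (hα : α ≤ 1) (ν : PMF V)
    (hν : ν.support ⊆ {a : V | expUtil K u n (y ++ [a]) ≥ expUtil K u (n + 1) y})
    (μ : PMF V) (hμ : ∀ a, μ a = α * ν a + (1 - α) * K y a) :
    ∑ a : V, (μ a).toReal * expUtil K u n (y ++ [a]) ≥ expUtil K u (n + 1) y := by
  set T := expUtil K u (n + 1) y with hT
  set f := fun a : V => expUtil K u n (y ++ [a]) with hf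
  have hαt : α ≠ ⊤ := hα.trans_lt ENNReal.one_lt_top |>.ne
  have hα't : (1 - α : ℝ≥0∞) ≠ ⊤ := (tsub_le_self.trans_lt ENNReal.one_lt_top).ne
  have hsplit : ∀ a : V, (μ a).toReal
      = α.toReal * (ν a).toReal + (1 - α).toReal * (K y a).toReal := by
    intro a
    rw [hμ a, ENNReal.toReal_add (ENNReal.mul_ne_top hαt (PMF.apply_ne_top _ _))
      (ENNReal.mul_ne_top hα't (PMF.apply_ne_top _ _)), ENNReal.toReal_mul,
      ENNReal.toReal_mul]
  have hsum : ∑ a : V, (μ a).toReal * f a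
      = α.toReal * (∑ a : V, (ν a).toReal * f a)
        + (1 - α).toReal * (∑ a : V, (K y a).toReal * f a) := by
    simp only [hsplit, add_mul, Finset.sum_add_distrib, Finset.mul_sum]
    ring_nf
  have hKsum : ∑ a : V, (K y a).toReal * f a = T := (tower K u n y).symm
  have hν1 : ∑ a : V, (ν a).toReal = 1 := by
    rw [← ENNReal.toReal_sum (fun a _ => PMF.apply_ne_top _ _), ← tsum_fintype (L := SummationFilter.unconditional V),
      ν.tsum_coe, ENNReal.toReal_one]
  have hνsum : ∑ a : V, (ν a).toReal * f a ≥ ∑ a : V, (ν a).toReal * T := by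
    refine Finset.sum_le_sum fun a _ => ?_
    by_cases h : ν a = 0
    · simp [h]
    · exact mul_le_mul_of_nonneg_left (hν (PMF.mem_support_iff _ _ |>.2 h))
        ENNReal.toReal_nonneg
  have hνT : ∑ a : V, (ν a).toReal * T = T := by
    rw [← Finset.sum_mul, hν1, one_mul]
  have hcoef : α.toReal + (1 - α).toReal = 1 := by
    rw [← ENNReal.toReal_add hαt hα't, add_tsub_cancel_of_le hα, ENNReal.toReal_one]
  calc ∑ a : V, (μ a).toReal * f a
      = α.toReal * (∑ a : V, (ν a).toReal * f a) + (1 - α).toReal * T := by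
        rw [hsum, hKsum]
    _ ≥ α.toReal * T + (1 - α).toReal * T := by
        have h := hνT ▸ hνsum
        gcongr
    _ = T := by rw [← add_mul, hcoef, one_mul]
end
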